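/- Assume H activates a cycle C via a nice activation process A = (H; Δ_1,…,Δ_s). Then the internal boundary of the A-activation diagram of C has exactly 2|E(H)| + exc(A) = 2(|V(H)|−1) + 2·d_H + exc(A) vertices (vertices with equal labels counted separately), where d_H = |E(H)| − |V(H)| + 1. -/
import Mathlib


namespace WSat

variable {V : Type} [Fintype V] [DecidableEq V]

/-- The edges of the triangle recorded in an activation step `(a, b, c)`:
the step activates the edge `{a, b}` using the triangle `{a, b, c}`. -/
def triEdges (st : V × V × V) : Set (Sym2 V) :=
  {s(st.1, st.2.1), s(st.1, st.2.2), s(st.2.1, st.2.2)}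

/-- The graph `H ∪ Δ₁ ∪ ⋯ ∪ Δ_s`. -/
def afterGraph (H : SimpleGraph V) (steps : List (V × V × V)) : SimpleGraph V :=
  H ⊔ SimpleGraph.fromEdgeSet {e | ∃ st ∈ steps, e ∈ triEdges st}

/-- `(H; Δ₁, …, Δ_s)` is a (`K₃`-bootstrap) activation process: at each step `i`, the
step `(a, b, c)` adds the new edge `{a, b}` (not present before), which forms the triangle
`{a, b, c}` together with the two previously present edges `{a, c}` and `{b, c}`. -/
def IsValidProcess (H : SimpleGraph V) (steps : List (V × V × V)) : Prop :=
  ∀ (i : ℕ) (hi : i < steps.length),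
    (steps.get ⟨i, hi⟩).1 ≠ (steps.get ⟨i, hi⟩).2.1 ∧
    ¬ (afterGraph H (steps.take i)).Adj (steps.get ⟨i, hi⟩).1 (steps.get ⟨i, hi⟩).2.1 ∧
    (afterGraph H (steps.take i)).Adj (steps.get ⟨i, hi⟩).1 (steps.get ⟨i, hi⟩).2.2 ∧
    (afterGraph H (steps.take i)).Adj (steps.get ⟨i, hi⟩).2.1 (steps.get ⟨i, hi⟩).2.2

/-- The number of (non-isolated) vertices of `G`. -/
noncomputable def supportCard (G : SimpleGraph V) : ℕ := Nat.card G.support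

/-- The number of edges of `G`. -/
noncomputable def edgeCard (G : SimpleGraph V) : ℕ := Nat.card G.edgeSet

/-- `con_A(e)`: the number of triangles of the process containing `e` that do not
activate `e`. -/
noncomputable def conA (steps : List (V × V × V)) (e : Sym2 V) : ℕ :=
  Nat.card {i : Fin steps.length //
    e = s((steps.get i).1, (steps.get i).2.2) ∨ e = s((steps.get i).2.1, (steps.get i).2.2)}

open scoped Classical in
/-- `exc_A(e)` relative to the initial graph `H` and the target graph `C`. -/
noncomputable def excA (H C : SimpleGraph V) (steps : List (V × V × V)) (e : Sym2 V) : ℤ :=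
  (conA steps e : ℤ) -
    (if e ∈ C.edgeSet then (if e ∈ H.edgeSet then 1 else 0)
     else (if e ∈ H.edgeSet then 2 else 1))

/-- `exc(A) = Σ_e exc_A(e)`, summed over the edges of `K(A)`. -/
noncomputable def excSum (H C : SimpleGraph V) (steps : List (V × V × V)) : ℤ :=
  ∑ᶠ e ∈ (afterGraph H steps).edgeSet, excA H C steps e

/-- A nice activation process from `H` activating `C` (that is, every edge of the
activation complex has nonnegative excess). -/
def NiceProcess (H C : SimpleGraph V) (steps : List (V × V × V)) : Prop :=
  IsValidProcess H steps ∧ C ≤ afterGraph H steps ∧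
    ∀ e ∈ (afterGraph H steps).edgeSet, 0 ≤ excA H C steps e

/-- A nice activation process from `H` activating `C` inside the ambient graph `G`. -/
def NiceActivation (G H C : SimpleGraph V) (steps : List (V × V × V)) : Prop :=
  NiceProcess H C steps ∧ afterGraph H steps ≤ G

/-- The subgraph consisting of the edges of the walk `w`. -/
def walkEdgeGraph {G : SimpleGraph V} {x y : V} (w : G.Walk x y) : SimpleGraph V :=
  SimpleGraph.fromEdgeSet {e | e ∈ w.edges}

/-- The complexity `d_H = |E(H)| − |V(H)| + 1` of a graph `H`. -/
noncomputable def complexity (H : SimpleGraph V) : ℤ :=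
  (edgeCard H : ℤ) - (supportCard H : ℤ) + 1

/-- The state of a (partially built) activation diagram: vertex identifiers
`0, …, nv - 1`, their labels, the internal boundary (a cyclic list of vertex identifiers),
the set of marked boundary edges, and the list of triangular faces glued so far. -/
structure DiagState (V : Type) where
  nv : ℕ
  label : ℕ → V
  boundary : List ℕ
  marked : Set (Sym2 ℕ)
  faces : List (ℕ × ℕ × ℕ)

/-- The edges of the cyclic list `B`. -/
def cycEdges (B : List ℕ) : Set (Sym2 ℕ) :=
  {e | e ∈ (B.zip (B.rotate 1)).map fun q => s(q.1, q.2)}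

/-- The initial state `D_{s+1} = C` for a cycle whose cyclic list of vertex labels is
`cyc` (with default label `x`): the boundary is the cycle, all of its edges are marked,
and there are no faces. -/
def initState (x : V) (cyc : List V) : DiagState V where
  nv := cyc.length
  label := fun i => cyc.getD i x
  boundary := List.range cyc.length
  marked := cycEdges (List.range cyc.length)
  faces := []

/-- The marked edges after gluing a triangle with apex labelled `c` onto the boundary edge
`{u, v}`: the edge `{u, v}` is unmarked, and each of the two new edges is marked unless a
marked edge with the same pair of labels already exists. -/
def glueMarked (D : DiagState V) (u v : ℕ) (c : V) : Set (Sym2 ℕ) :=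
  (D.marked \ {s(u, v)}) ∪
    {f | (f = s(u, D.nv) ∧ ¬ ∃ e ∈ D.marked, Sym2.map D.label e = s(D.label u, c)) ∨
         (f = s(v, D.nv) ∧ ¬ ∃ e ∈ D.marked, Sym2.map D.label e = s(D.label v, c))}

/-- The state obtained from `D` by gluing a triangle with apex labelled `c` onto the
boundary edge at position `i`. -/
def glueResult (D : DiagState V) (i : ℕ) (c : V) : DiagState V where
  nv := D.nv + 1
  label := Function.update D.label D.nv c
  boundary := D.boundary.take (i + 1) ++ D.nv :: D.boundary.drop (i + 1)
  marked := glueMarked D (D.boundary.getD i 0)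
    (D.boundary.getD ((i + 1) % D.boundary.length) 0) c
  faces := (D.boundary.getD i 0,
    D.boundary.getD ((i + 1) % D.boundary.length) 0, D.nv) :: D.faces

/-- Gluing a triangle labelled `{a, b, c}` (activating the edge labelled `{a, b}`, apex
labelled `c`) onto a marked internal boundary edge whose labels are `{a, b}`. -/
def GlueStep (D D' : DiagState V) (a b c : V) : Prop :=
  ∃ i : ℕ, i < D.boundary.length ∧
    s(D.boundary.getD i 0, D.boundary.getD ((i + 1) % D.boundary.length) 0) ∈ D.marked ∧
    s(D.label (D.boundary.getD i 0),
      D.label (D.boundary.getD ((i + 1) % D.boundary.length) 0)) = s(a, b) ∧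
    D' = glueResult D i c

/-- `DiagReaches steps D D'` holds when `D'` is obtained from `D` by gluing the triangles
of `steps` in reverse order (`Δ_s` first, `Δ₁` last), as in the activation diagram
construction. -/
def DiagReaches : List (V × V × V) → DiagState V → DiagState V → Prop
  | [], D, D' => D' = D
  | st :: rest, D, D' => ∃ Dmid, DiagReaches rest D Dmid ∧ GlueStep Dmid D' st.1 st.2.1 st.2.2


open scoped Classical

set_option linter.unusedSectionVars false

lemma mem_afterGraph_edgeSet {H : SimpleGraph V} {l : List (V × V × V)} {e : Sym2 V} :
    e ∈ (afterGraph H l).edgeSet ↔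
      e ∈ H.edgeSet ∨ ((∃ st ∈ l, e ∈ triEdges st) ∧ ¬ e.IsDiag) := by
  simp [afterGraph, SimpleGraph.edgeSet_sup, SimpleGraph.edgeSet_fromEdgeSet,
    Set.mem_diff, Set.mem_setOf_eq]

lemma afterGraph_mono_append (H : SimpleGraph V) (l l' : List (V × V × V)) :
    afterGraph H l ≤ afterGraph H (l ++ l') := by
  apply sup_le_sup_left
  apply SimpleGraph.fromEdgeSet_mono
  rintro e ⟨st, hst, h⟩
  exact ⟨st, List.mem_append_left _ hst, h⟩

lemma afterGraph_take_le (H : SimpleGraph V) (steps : List (V × V × V)) (n : ℕ) :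
    afterGraph H (steps.take n) ≤ afterGraph H steps := by
  apply sup_le_sup_left
  apply SimpleGraph.fromEdgeSet_mono
  rintro e ⟨st, hst, h⟩
  exact ⟨st, List.mem_of_mem_take hst, h⟩

lemma edgeCard_afterGraph_take (H : SimpleGraph V) (steps : List (V × V × V))
    (hv : IsValidProcess H steps) :
    ∀ n ≤ steps.length, edgeCard (afterGraph H (steps.take n)) = edgeCard H + n := by
  intro n
  induction n with
  | zero =>
    intro _
    have h0 : afterGraph H (steps.take 0) = H := by
      simp [afterGraph]
    rw [h0]
    omega
  | succ n ih =>
    intro hn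
    have hn' : n < steps.length := hn
    obtain ⟨hab, hnadj, hac, hbc⟩ := hv n hn'
    set st := steps.get ⟨n, hn'⟩ with hst
    have htake : steps.take (n + 1) = steps.take n ++ [st] := by
      rw [List.take_succ]
      simp [List.getElem?_eq_getElem hn', hst]
    have hle2 : afterGraph H (steps.take n) ≤ afterGraph H (steps.take (n + 1)) := by
      rw [htake]; exact afterGraph_mono_append H _ _
    have hset : (afterGraph H (steps.take (n + 1))).edgeSet
        = insert s(st.1, st.2.1) (afterGraph H (steps.take n)).edgeSet := by
      ext e
      rw [Set.mem_insert_iff]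
      constructor
      · intro he
        rcases mem_afterGraph_edgeSet.mp he with he' | ⟨⟨st', hst', hmem⟩, hdiag⟩
        · exact Or.inr (mem_afterGraph_edgeSet.mpr (Or.inl he'))
        · rw [htake, List.mem_append, List.mem_singleton] at hst'
          rcases hst' with hst' | rfl
          · exact Or.inr (mem_afterGraph_edgeSet.mpr (Or.inr ⟨⟨st', hst', hmem⟩, hdiag⟩))
          · simp only [triEdges, Set.mem_insert_iff, Set.mem_singleton_iff] at hmem
            rcases hmem with h | h | h
            · exact Or.inl h
            · exact Or.inr (h ▸ (SimpleGraph.mem_edgeSet _).2 hac)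
            · exact Or.inr (h ▸ (SimpleGraph.mem_edgeSet _).2 hbc)
      · rintro (rfl | he)
        · refine mem_afterGraph_edgeSet.mpr (Or.inr ⟨⟨st, ?_, ?_⟩, ?_⟩)
          · rw [htake]; exact List.mem_append_right _ (List.mem_singleton.2 rfl)
          · simp [triEdges]
          · simpa [Sym2.mk_isDiag_iff] using hab
        · exact SimpleGraph.edgeSet_mono hle2 he
    have hnotmem : s(st.1, st.2.1) ∉ (afterGraph H (steps.take n)).edgeSet := by
      rw [SimpleGraph.mem_edgeSet]; exact hnadj
    rw [edgeCard, Nat.card_coe_set_eq, hset,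
      Set.ncard_insert_of_notMem hnotmem (Set.toFinite _),
      ← Nat.card_coe_set_eq, ← edgeCard, ih (le_of_lt hn')]
    omega

lemma edgeCard_afterGraph (H : SimpleGraph V) (steps : List (V × V × V))
    (hv : IsValidProcess H steps) :
    edgeCard (afterGraph H steps) = edgeCard H + steps.length := by
  have := edgeCard_afterGraph_take H steps hv steps.length le_rfl
  rwa [List.take_length] at this

lemma conA_eq_filter_card (steps : List (V × V × V)) (e : Sym2 V) :
    conA steps e = (Finset.univ.filter fun i : Fin steps.length =>
      e = s((steps.get i).1, (steps.get i).2.2) ∨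
      e = s((steps.get i).2.1, (steps.get i).2.2)).card := by
  rw [conA, Nat.card_eq_fintype_card, Fintype.card_subtype]

lemma sum_conA (H : SimpleGraph V) (steps : List (V × V × V))
    (hv : IsValidProcess H steps) :
    ∑ e ∈ (Set.toFinite (afterGraph H steps).edgeSet).toFinset, conA steps e
      = 2 * steps.length := by
  have key : ∀ i : Fin steps.length,
      ((Set.toFinite (afterGraph H steps).edgeSet).toFinset.filter fun e =>
        e = s((steps.get i).1, (steps.get i).2.2) ∨
        e = s((steps.get i).2.1, (steps.get i).2.2)).card = 2 := by
    intro i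
    obtain ⟨hab, hnadj, hac, hbc⟩ := hv i i.isLt
    simp only [Fin.eta] at hab hnadj hac hbc
    have hac' : (afterGraph H steps).Adj (steps.get i).1 (steps.get i).2.2 := by
      have h := SimpleGraph.edgeSet_mono (afterGraph_take_le H steps i)
        (((afterGraph H (steps.take i)).mem_edgeSet).mpr hac)
      exact ((afterGraph H steps).mem_edgeSet).mp h
    have hbc' : (afterGraph H steps).Adj (steps.get i).2.1 (steps.get i).2.2 := by
      have h := SimpleGraph.edgeSet_mono (afterGraph_take_le H steps i)
        (((afterGraph H (steps.take i)).mem_edgeSet).mpr hbc)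
      exact ((afterGraph H steps).mem_edgeSet).mp h
    have hne : s((steps.get i).1, (steps.get i).2.2) ≠
        s((steps.get i).2.1, (steps.get i).2.2) := by
      intro h
      rw [Sym2.eq_iff] at h
      rcases h with ⟨h1, _⟩ | ⟨h1, h2⟩
      · exact hab h1
      · exact hab (h1.trans h2)
    have hfe : (Set.toFinite (afterGraph H steps).edgeSet).toFinset.filter (fun e =>
        e = s((steps.get i).1, (steps.get i).2.2) ∨
        e = s((steps.get i).2.1, (steps.get i).2.2))
        = {s((steps.get i).1, (steps.get i).2.2),
           s((steps.get i).2.1, (steps.get i).2.2)} := by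
      ext f
      simp only [Finset.mem_filter, Set.Finite.mem_toFinset, Finset.mem_insert,
        Finset.mem_singleton]
      constructor
      · rintro ⟨_, h⟩; exact h
      · rintro (rfl | rfl)
        · exact ⟨(SimpleGraph.mem_edgeSet _).2 hac', Or.inl rfl⟩
        · exact ⟨(SimpleGraph.mem_edgeSet _).2 hbc', Or.inr rfl⟩
    rw [hfe, Finset.card_insert_of_notMem (by simpa using hne), Finset.card_singleton]
  calc ∑ e ∈ (Set.toFinite (afterGraph H steps).edgeSet).toFinset, conA steps e
      = ∑ e ∈ (Set.toFinite (afterGraph H steps).edgeSet).toFinset,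
          ∑ i : Fin steps.length, (if e = s((steps.get i).1, (steps.get i).2.2) ∨
            e = s((steps.get i).2.1, (steps.get i).2.2) then 1 else 0) := by
        refine Finset.sum_congr rfl fun e _ => ?_
        rw [conA_eq_filter_card, Finset.card_filter]
    _ = ∑ i : Fin steps.length,
          ∑ e ∈ (Set.toFinite (afterGraph H steps).edgeSet).toFinset,
          (if e = s((steps.get i).1, (steps.get i).2.2) ∨
            e = s((steps.get i).2.1, (steps.get i).2.2) then 1 else 0) :=
        Finset.sum_comm
    _ = ∑ i : Fin steps.length, 2 := by
        refine Finset.sum_congr rfl fun i _ => ?_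
        rw [← Finset.card_filter, key i]
    _ = 2 * steps.length := by simp [mul_comm]

lemma excA_eq (H C : SimpleGraph V) (steps : List (V × V × V)) (e : Sym2 V) :
    excA H C steps e = (conA steps e : ℤ) - 1
      - (if e ∈ H.edgeSet then 1 else 0) + (if e ∈ C.edgeSet then 1 else 0) := by
  rw [excA]
  split_ifs <;> ring

lemma sum_indicator_edge (G K : SimpleGraph V) (hle : G ≤ K) :
    ∑ e ∈ (Set.toFinite K.edgeSet).toFinset, (if e ∈ G.edgeSet then (1 : ℤ) else 0)
      = (edgeCard G : ℤ) := by
  rw [Finset.sum_boole]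
  congr 1
  have hfe : (Set.toFinite K.edgeSet).toFinset.filter (fun e => e ∈ G.edgeSet)
      = (Set.toFinite G.edgeSet).toFinset := by
    ext e
    simp only [Finset.mem_filter, Set.Finite.mem_toFinset]
    exact ⟨fun h => h.2, fun h => ⟨SimpleGraph.edgeSet_mono hle h, h⟩⟩
  rw [hfe, edgeCard, Nat.card_coe_set_eq, Set.ncard_eq_toFinset_card]

lemma diag_boundary_length :
    ∀ (steps : List (V × V × V)) (D0 D : DiagState V),
      DiagReaches steps D0 D → D.boundary.length = D0.boundary.length + steps.length := by
  intro steps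
  induction steps with
  | nil =>
    intro D0 D h
    rw [show D = D0 from h]
    simp
  | cons st rest ih =>
    rintro D0 D ⟨Dmid, hmid, i, hi, _, _, rfl⟩
    have hm := ih D0 Dmid hmid
    simp only [glueResult, List.length_append, List.length_take, List.length_drop,
      List.length_cons] at *
    omega


/-- If `H` activates a cycle `C` via a nice activation process `A`,
then the internal boundary of the `A`-activation diagram of `C` has exactly
`2|E(H)| + exc(A) = 2(|V(H)| − 1) + 2 d_H + exc(A)` vertices (vertices with equal labels
counted separately). -/
theorem statement10 (H : SimpleGraph V) (steps : List (V × V × V)) (x : V)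
    (wk : (afterGraph H steps).Walk x x) (hcyc : wk.IsCycle)
    (hnice : NiceProcess H (walkEdgeGraph wk) steps)
    (D : DiagState V) (hD : DiagReaches steps (initState x wk.support.dropLast) D) :
    (D.boundary.length : ℤ)
        = 2 * (edgeCard H : ℤ) + excSum H (walkEdgeGraph wk) steps ∧
    (D.boundary.length : ℤ)
        = 2 * ((supportCard H : ℤ) - 1) + 2 * complexity H
          + excSum H (walkEdgeGraph wk) steps := by

  classical
  obtain ⟨hv, hCle, -⟩ := hnice
  have hCedge : (walkEdgeGraph wk).edgeSet = ↑wk.edges.toFinset := by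
    rw [walkEdgeGraph, SimpleGraph.edgeSet_fromEdgeSet]
    ext e
    simp only [Set.mem_diff, Set.mem_setOf_eq, Finset.coe_sort_coe, Finset.mem_coe,
      List.mem_toFinset]
    constructor
    · rintro ⟨h, _⟩; exact h
    · intro h
      refine ⟨h, fun hd => ?_⟩
      exact ((afterGraph H steps).not_isDiag_of_mem_edgeSet
        (wk.edges_subset_edgeSet h)) hd
  have hCcard : edgeCard (walkEdgeGraph wk) = wk.length := by
    rw [edgeCard, Nat.card_coe_set_eq, hCedge, Set.ncard_coe_finset,
      List.toFinset_card_of_nodup hcyc.edges_nodup, SimpleGraph.Walk.length_edges]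
  have hKcard : edgeCard (afterGraph H steps) = edgeCard H + steps.length :=
    edgeCard_afterGraph H steps hv
  have hblen : D.boundary.length = wk.length + steps.length := by
    have h := diag_boundary_length steps _ D hD
    rw [h]
    simp only [initState, List.length_range, List.length_dropLast,
      SimpleGraph.Walk.length_support]
    omega
  have hfin := Set.toFinite (afterGraph H steps).edgeSet
  have hcoe : (afterGraph H steps).edgeSet = ↑hfin.toFinset :=
    (Set.Finite.coe_toFinset _).symm
  have hexc : excSum H (walkEdgeGraph wk) steps = 2 * (steps.length : ℤ)
      - (edgeCard (afterGraph H steps) : ℤ)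
      - (edgeCard H : ℤ) + (edgeCard (walkEdgeGraph wk) : ℤ) := by
    rw [excSum, hcoe, finsum_mem_coe_finset]
    have hpt : ∀ e ∈ hfin.toFinset, excA H (walkEdgeGraph wk) steps e
        = (conA steps e : ℤ) - 1
        - (if e ∈ H.edgeSet then 1 else 0)
        + (if e ∈ (walkEdgeGraph wk).edgeSet then 1 else 0) :=
      fun e _ => excA_eq H (walkEdgeGraph wk) steps e
    rw [Finset.sum_congr rfl hpt, Finset.sum_add_distrib, Finset.sum_sub_distrib,
      Finset.sum_sub_distrib, sum_indicator_edge H (afterGraph H steps) le_sup_left,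
      sum_indicator_edge (walkEdgeGraph wk) (afterGraph H steps) hCle]
    have h1 : ∑ e ∈ hfin.toFinset, (conA steps e : ℤ) = 2 * (steps.length : ℤ) := by
      rw [← Nat.cast_sum]
      norm_cast
      exact sum_conA H steps hv
    have h2 : ∑ _e ∈ hfin.toFinset, (1 : ℤ)
        = (edgeCard (afterGraph H steps) : ℤ) := by
      rw [Finset.sum_const, nsmul_eq_mul, mul_one, edgeCard, Nat.card_coe_set_eq,
        Set.ncard_eq_toFinset_card]
    rw [h1, h2]
  constructor
  · rw [hblen, hexc, hKcard, hCcard]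
    push_cast
    ring
  · rw [hblen, hexc, hKcard, hCcard, complexity]
    push_cast
    ring


end WSat
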